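/- Let n ≥ 1, μ ∈ (0, 2), u₀ ∈ L¹(ℝⁿ) and u₁ ∈ L^{1,1}(ℝⁿ). For ξ ∈ ℝⁿ \ {0} write r := |ξ| and b(r) := √(r² - (μ²/4) log²(1+r)), and define w(t,ξ) := (1+r)^{-μt/2} [ cos(b(r)t)·û₀(ξ) + (μ log(1+r)/(2b(r)))·sin(b(r)t)·û₀(ξ) + (1/b(r))·sin(b(r)t)·û₁(ξ) ], and P₁ := ∫_{ℝⁿ} u₁(x) dx. Then there exist constants C₁ > 0, C₂ > 0, α > 0 and t₀ > 0, depending only on n and μ, such that for all t ≥ t₀: C₁ |P₁| t^{1-n/2} ≤ (∫_{ℝⁿ} |w(t,ξ)|² dξ)^{1/2} ≤ C₂ (‖u₁‖_{1,1} t^{-n/2} + ‖u₀‖₁ t^{-n/2} + |P₁| t^{1-n/2} + |P₁| e^{-αt}). -/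

import Mathlib

/-!
The factor `(1 + |ξ|)^{-μt/2}` localises `w(t, ·)` at frequencies `|ξ| ≲ 1/t`: by Bernoulli's
inequality `(1 + r)^{-μt} ≤ (1 + μt r / N)^{-N}`, so the substitution `ξ ↦ ξ / t` gives
`∫ (1 + |ξ|)^{-μt} |ξ|^k dξ = O(t^{-n-k})`. Since `b(r) ≍ r` for `μ < 2`, the multipliers of `û₀`
are bounded and `|sin (b t) / b| ≤ t`, while `|û₁(ξ) - P₁| ≤ |ξ| ‖u₁‖_{1,1}`; this gives the
upper bound. On the punctured ball `0 < |ξ| < 1/t` one has instead `sin (b t) / b ≥ 2t/π`,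
`(1 + |ξ|)^{-μt/2} ≥ e^{-μ/2}` and `|û₁(ξ)| ≥ |P₁| - ‖u₁‖_{1,1} / t`, so `|w(t, ξ)| ≳ t |P₁|`
there once `t` is large; the ball has volume `≍ t^{-n}`, whence `‖w(t)‖₂ ≳ |P₁| t^{1-n/2}`.
-/

open MeasureTheory

/-- The Fourier transform `f̂(ξ) = ∫ e^{-i x·ξ} f(x) dx`. -/
noncomputable def fourierTransformCLM' {n : ℕ} (f : EuclideanSpace ℝ (Fin n) → ℂ)
    (ξ : EuclideanSpace ℝ (Fin n)) : ℂ :=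
  ∫ x, Complex.exp (-(Complex.I * ((inner ℝ x ξ : ℝ) : ℂ))) * f x

open Module

theorem log_one_add_le_self {r : ℝ} (hr : 0 ≤ r) : Real.log (1 + r) ≤ r := by
  linarith [Real.log_le_sub_one_of_pos (show 0 < 1 + r by linarith)]

theorem exp_neg_mul_le_one_add_rpow_neg {r s : ℝ} (hr : 0 ≤ r) (hs : 0 ≤ s) :
    Real.exp (-(s * r)) ≤ (1 + r) ^ (-s) := by
  rw [Real.rpow_def_of_pos (by linarith)]
  gcongr
  nlinarith [log_one_add_le_self hr]

theorem one_add_rpow_neg_le {a N r : ℝ} (hN : 0 < N) (hNa : N ≤ a) (hr : 0 ≤ r) :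
    (1 + r) ^ (-a) ≤ (1 + a / N * r) ^ (-N) := by
  have hBernoulli : 1 + a / N * r ≤ (1 + r) ^ (a / N) :=
    one_add_mul_self_le_rpow_one_add (by linarith) ((one_le_div hN).2 hNa)
  have hbase : 0 < 1 + a / N * r := by
    have : 0 ≤ a / N * r := mul_nonneg (div_nonneg (by linarith) hN.le) hr
    linarith
  have hpow : (1 + a / N * r) ^ N ≤ (1 + r) ^ a := by
    calc (1 + a / N * r) ^ N ≤ ((1 + r) ^ (a / N)) ^ N := by gcongr
      _ = (1 + r) ^ a := by rw [← Real.rpow_mul (by linarith)]; field_simp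
  rw [Real.rpow_neg (by linarith), Real.rpow_neg hbase.le]
  exact inv_anti₀ (Real.rpow_pos_of_pos hbase _) hpow

section AddHaar

variable {E : Type*} [NormedAddCommGroup E] [NormedSpace ℝ E] [FiniteDimensional ℝ E]
  [MeasurableSpace E] [BorelSpace E]

theorem measureReal_ball_diff_singleton [Nontrivial E] (ν : Measure E) [ν.IsAddHaarMeasure]
    (x : E) {r : ℝ} (hr : 0 ≤ r) :
    ν.real (Metric.ball x r \ {x}) = r ^ finrank ℝ E * ν.real (Metric.ball 0 1) := by
  rw [measureReal_def, measure_sdiff_null (measure_singleton x), Measure.addHaar_ball ν x hr,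
    ENNReal.toReal_mul, ENNReal.toReal_ofReal (by positivity), measureReal_def]

variable {ν : Measure E} [ν.IsAddHaarMeasure]

theorem integrable_one_add_norm_rpow_neg_mul_pow {N : ℝ} (k : ℕ)
    (hN : (finrank ℝ E : ℝ) + k < N) :
    Integrable (fun y : E => (1 + ‖y‖) ^ (-N) * ‖y‖ ^ k) ν := by
  refine (integrable_one_add_norm (μ := ν) (r := N - k) (by linarith)).mono'
    (by fun_prop) (Filter.Eventually.of_forall fun y => ?_)
  have hy : 0 < 1 + ‖y‖ := by positivity
  rw [Real.norm_eq_abs, abs_of_nonneg (by positivity)]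
  calc (1 + ‖y‖) ^ (-N) * ‖y‖ ^ k ≤ (1 + ‖y‖) ^ (-N) * (1 + ‖y‖) ^ (k : ℝ) := by
        rw [Real.rpow_natCast]; gcongr; linarith
    _ = (1 + ‖y‖) ^ (-(N - k)) := by rw [← Real.rpow_add hy]; ring_nf

theorem integral_one_add_norm_rpow_neg_mul_pow_le {N a : ℝ} (k : ℕ)
    (hN : (finrank ℝ E : ℝ) + k < N) (hNa : N ≤ a) :
    Integrable (fun ξ : E => (1 + ‖ξ‖) ^ (-a) * ‖ξ‖ ^ k) ν ∧
      ∫ ξ, (1 + ‖ξ‖) ^ (-a) * ‖ξ‖ ^ k ∂ν ≤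
        (N / a) ^ (finrank ℝ E + k) * ∫ y, (1 + ‖y‖) ^ (-N) * ‖y‖ ^ k ∂ν := by
  have hN0 : 0 < N := lt_of_le_of_lt (by positivity) hN
  set c := a / N with hc
  have hc0 : 0 < c := div_pos (by linarith) hN0
  set g : E → ℝ := fun y => (1 + ‖y‖) ^ (-N) * ‖y‖ ^ k
  have hg : Integrable g ν := integrable_one_add_norm_rpow_neg_mul_pow k hN
  have hmaj : ∀ ξ : E, (1 + ‖ξ‖) ^ (-a) * ‖ξ‖ ^ k ≤ (c ^ k)⁻¹ * g (c • ξ) := by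
    intro ξ
    simp only [g, norm_smul, Real.norm_eq_abs, abs_of_pos hc0, mul_pow]
    rw [mul_left_comm, inv_mul_cancel_left₀ (pow_ne_zero _ hc0.ne')]
    gcongr
    exact one_add_rpow_neg_le hN0 hNa (norm_nonneg ξ)
  have hmaj_int : Integrable (fun ξ => (c ^ k)⁻¹ * g (c • ξ)) ν :=
    (hg.comp_smul hc0.ne').const_mul _
  refine ⟨hmaj_int.mono' (by fun_prop) (Filter.Eventually.of_forall fun ξ => ?_), ?_⟩
  · rw [Real.norm_eq_abs, abs_of_nonneg (by positivity)]
    exact hmaj ξ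
  calc ∫ ξ, (1 + ‖ξ‖) ^ (-a) * ‖ξ‖ ^ k ∂ν ≤ ∫ ξ, (c ^ k)⁻¹ * g (c • ξ) ∂ν :=
        integral_mono_of_nonneg (Filter.Eventually.of_forall fun ξ => by positivity) hmaj_int
          (Filter.Eventually.of_forall hmaj)
    _ = (N / a) ^ (finrank ℝ E + k) * ∫ y, g y ∂ν := by
        rw [integral_const_mul, Measure.integral_comp_smul_of_nonneg ν g c (hR := hc0.le),
          smul_eq_mul, ← mul_assoc, ← mul_inv, ← pow_add, add_comm k, ← inv_pow, hc, inv_div]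

end AddHaar

section Fourier

variable {n : ℕ}

theorem norm_fourierTransformCLM'_le (u : EuclideanSpace ℝ (Fin n) → ℂ)
    (ξ : EuclideanSpace ℝ (Fin n)) : ‖fourierTransformCLM' u ξ‖ ≤ ∫ x, ‖u x‖ :=
  (norm_integral_le_integral_norm _).trans_eq <| by simp [Complex.norm_exp]

theorem continuous_fourierTransformCLM' {u : EuclideanSpace ℝ (Fin n) → ℂ} (hu : Integrable u) :
    Continuous (fourierTransformCLM' u) :=
  continuous_of_dominated (fun ξ => by fun_prop) (fun ξ => .of_forall fun x => by
    simp [Complex.norm_exp]) hu.norm (.of_forall fun x => by fun_prop)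

theorem norm_fourierTransformCLM'_sub_integral_le {u : EuclideanSpace ℝ (Fin n) → ℂ}
    (hu : Integrable u) (hw : Integrable fun x => (1 + ‖x‖) * ‖u x‖)
    (ξ : EuclideanSpace ℝ (Fin n)) :
    ‖fourierTransformCLM' u ξ - ∫ x, u x‖ ≤ ‖ξ‖ * ∫ x, (1 + ‖x‖) * ‖u x‖ := by
  have hint : Integrable fun x => Complex.exp (-(Complex.I * ((inner ℝ x ξ : ℝ) : ℂ))) * u x :=
    hu.bdd_mul (c := 1) (by fun_prop) (.of_forall fun x => by simp [Complex.norm_exp])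
  rw [fourierTransformCLM', ← integral_sub hint hu, ← integral_const_mul]
  refine (norm_integral_le_integral_norm _).trans (integral_mono_of_nonneg
    (.of_forall fun x => norm_nonneg _) (hw.const_mul _) (.of_forall fun x => ?_))
  have hphase : ‖Complex.exp (-(Complex.I * ((inner ℝ x ξ : ℝ) : ℂ))) - 1‖ ≤ ‖x‖ * ‖ξ‖ := by
    have := Real.norm_exp_I_mul_ofReal_sub_one_le (x := -inner ℝ x ξ)
    rw [Complex.ofReal_neg, mul_neg, norm_neg] at this
    exact this.trans (abs_real_inner_le_norm x ξ)
  calc ‖Complex.exp (-(Complex.I * ((inner ℝ x ξ : ℝ) : ℂ))) * u x - u x‖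
      = ‖Complex.exp (-(Complex.I * ((inner ℝ x ξ : ℝ) : ℂ))) - 1‖ * ‖u x‖ := by
        rw [← norm_mul, sub_one_mul]
    _ ≤ ‖ξ‖ * ((1 + ‖x‖) * ‖u x‖) := by nlinarith [norm_nonneg (u x), norm_nonneg ξ]

end Fourier

section Frequency

/-- The frequency `b(r)` of the damped oscillation at `|ξ| = r`. -/
noncomputable def dampedFreq (μ r : ℝ) : ℝ := √(r ^ 2 - μ ^ 2 / 4 * Real.log (1 + r) ^ 2)

variable {μ r : ℝ}

theorem sqrt_one_sub_mul_le_dampedFreq (hr : 0 ≤ r) :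
    √(1 - μ ^ 2 / 4) * r ≤ dampedFreq μ r := by
  rw [← Real.sqrt_sq hr, ← Real.sqrt_mul' _ (sq_nonneg r), Real.sqrt_sq hr]
  have hlog := log_one_add_le_self hr
  have hlog0 : 0 ≤ Real.log (1 + r) := Real.log_nonneg (by linarith)
  exact Real.sqrt_le_sqrt (by nlinarith [sq_nonneg μ, mul_le_mul hlog hlog hlog0 hr])

theorem dampedFreq_le (hr : 0 ≤ r) : dampedFreq μ r ≤ r := by
  refine (Real.sqrt_le_sqrt ?_).trans_eq (Real.sqrt_sq hr)
  nlinarith [sq_nonneg μ, sq_nonneg (Real.log (1 + r))]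

theorem dampedFreq_pos (hμ : μ ^ 2 < 4) (hr : 0 < r) : 0 < dampedFreq μ r :=
  (mul_pos (Real.sqrt_pos.2 (by linarith)) hr).trans_le (sqrt_one_sub_mul_le_dampedFreq hr.le)

theorem abs_mul_log_div_dampedFreq_le (hμ : μ ^ 2 < 4) (hr : 0 ≤ r) :
    |μ * Real.log (1 + r) / (2 * dampedFreq μ r)| ≤ |μ| / (2 * √(1 - μ ^ 2 / 4)) := by
  have hκ : 0 < √(1 - μ ^ 2 / 4) := Real.sqrt_pos.2 (by linarith)
  rcases hr.eq_or_lt with rfl | hr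
  · simp only [add_zero, Real.log_one, mul_zero, zero_div, abs_zero]
    positivity
  have hb := sqrt_one_sub_mul_le_dampedFreq (μ := μ) hr.le
  have hb0 := dampedFreq_pos hμ hr
  have hlog := log_one_add_le_self hr.le
  have hlog0 : 0 ≤ Real.log (1 + r) := Real.log_nonneg (by linarith)
  rw [abs_div, abs_mul μ, abs_of_nonneg hlog0, abs_of_pos (by positivity : 0 < 2 * dampedFreq μ r),
    div_le_div_iff₀ (by positivity) (by positivity)]
  have : √(1 - μ ^ 2 / 4) * Real.log (1 + r) ≤ dampedFreq μ r :=
    (mul_le_mul_of_nonneg_left hlog hκ.le).trans hb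
  nlinarith [mul_le_mul_of_nonneg_left this (abs_nonneg μ)]

end Frequency

theorem abs_one_div_mul_sin_mul_le (b t : ℝ) : |1 / b * Real.sin (b * t)| ≤ |t| := by
  rcases eq_or_ne b 0 with rfl | hb
  · simp
  rw [abs_mul, abs_one_div, div_mul_eq_mul_div, one_mul, div_le_iff₀ (abs_pos.2 hb)]
  exact (Real.abs_sin_le_abs).trans_eq (by rw [abs_mul, mul_comm])

theorem two_div_pi_mul_le_one_div_mul_sin_mul {b t : ℝ} (hb : 0 < b) (ht : 0 ≤ t)
    (hbt : b * t ≤ Real.pi / 2) : 2 / Real.pi * t ≤ 1 / b * Real.sin (b * t) := by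
  have := Real.mul_le_sin (by positivity) hbt
  rw [one_div_mul_eq_div, le_div_iff₀ hb]
  linarith

theorem rpow_neg_half_sq {t : ℝ} (ht : 0 ≤ t) (n : ℕ) : (t ^ (-(n : ℝ) / 2)) ^ 2 = (t ^ n)⁻¹ := by
  rw [← Real.rpow_natCast, ← Real.rpow_mul ht, ← Real.rpow_natCast t n, ← Real.rpow_neg ht]
  ring_nf

theorem rpow_one_sub_half {t : ℝ} (ht : 0 < t) (n : ℕ) :
    t ^ (1 - (n : ℝ) / 2) = t * t ^ (-(n : ℝ) / 2) := by
  rw [sub_eq_add_neg, Real.rpow_add ht, Real.rpow_one, neg_div]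

section Wave

variable {n : ℕ} {μ t : ℝ} {u₀ u₁ : EuclideanSpace ℝ (Fin n) → ℂ}

/-- The Fourier transform `w(t, ξ)` of the solution. At `ξ = 0` the convention `1 / 0 = 0` drops
the `û₁` term, so lower bounds on `‖w(t, ξ)‖` must avoid `ξ = 0`. -/
noncomputable def dampedWaveHat (μ : ℝ) (u₀ u₁ : EuclideanSpace ℝ (Fin n) → ℂ) (t : ℝ)
    (ξ : EuclideanSpace ℝ (Fin n)) : ℂ :=
  (((1 + ‖ξ‖) ^ (-(μ * t) / 2) : ℝ) : ℂ) *
    (((Real.cos (dampedFreq μ ‖ξ‖ * t) : ℝ) : ℂ) * fourierTransformCLM' u₀ ξ +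
     ((μ * Real.log (1 + ‖ξ‖) / (2 * dampedFreq μ ‖ξ‖) : ℝ) : ℂ) *
       ((Real.sin (dampedFreq μ ‖ξ‖ * t) : ℝ) : ℂ) * fourierTransformCLM' u₀ ξ +
     ((1 / dampedFreq μ ‖ξ‖ : ℝ) : ℂ) * ((Real.sin (dampedFreq μ ‖ξ‖ * t) : ℝ) : ℂ) *
       fourierTransformCLM' u₁ ξ)

theorem measurable_dampedWaveHat (hu₀ : Integrable u₀) (hu₁ : Integrable u₁) :
    Measurable (dampedWaveHat μ u₀ u₁ t) := by
  have := (continuous_fourierTransformCLM' hu₀).measurable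
  have := (continuous_fourierTransformCLM' hu₁).measurable
  unfold dampedWaveHat dampedFreq
  fun_prop

theorem norm_cos_add_sin_mul_le (hμ : μ ^ 2 < 4) {r : ℝ} (hr : 0 ≤ r) (z : ℂ) :
    ‖((Real.cos (dampedFreq μ r * t) : ℝ) : ℂ) * z +
        ((μ * Real.log (1 + r) / (2 * dampedFreq μ r) : ℝ) : ℂ) *
          ((Real.sin (dampedFreq μ r * t) : ℝ) : ℂ) * z‖ ≤
      (1 + |μ| / (2 * √(1 - μ ^ 2 / 4))) * ‖z‖ := by
  refine (norm_add_le _ _).trans ?_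
  simp only [norm_mul, Complex.norm_real, Real.norm_eq_abs]
  have hcoef := abs_mul_log_div_dampedFreq_le hμ hr
  have hcos := Real.abs_cos_le_one (dampedFreq μ r * t)
  have hsin := Real.abs_sin_le_one (dampedFreq μ r * t)
  have hz := norm_nonneg z
  nlinarith [mul_le_mul hcoef hsin (abs_nonneg _) (hcoef.trans' (abs_nonneg _)),
    abs_nonneg (Real.cos (dampedFreq μ r * t)), abs_nonneg (Real.sin (dampedFreq μ r * t))]

theorem norm_one_div_mul_sin_mul (r : ℝ) (z : ℂ) :
    ‖((1 / dampedFreq μ r : ℝ) : ℂ) * ((Real.sin (dampedFreq μ r * t) : ℝ) : ℂ) * z‖ =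
      |1 / dampedFreq μ r * Real.sin (dampedFreq μ r * t)| * ‖z‖ := by
  simp only [norm_mul, Complex.norm_real, Real.norm_eq_abs, abs_mul]

theorem norm_dampedWaveHat_le (hμ : μ ^ 2 < 4) (ξ : EuclideanSpace ℝ (Fin n)) :
    ‖dampedWaveHat μ u₀ u₁ t ξ‖ ≤ (1 + ‖ξ‖) ^ (-(μ * t) / 2) *
      ((1 + |μ| / (2 * √(1 - μ ^ 2 / 4))) * ‖fourierTransformCLM' u₀ ξ‖ +
        |t| * ‖fourierTransformCLM' u₁ ξ‖) := by
  rw [dampedWaveHat, norm_mul, Complex.norm_real, Real.norm_of_nonneg (by positivity)]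
  gcongr
  refine (norm_add_le _ _).trans (add_le_add (norm_cos_add_sin_mul_le hμ (norm_nonneg ξ) _) ?_)
  rw [norm_one_div_mul_sin_mul]
  exact mul_le_mul_of_nonneg_right (abs_one_div_mul_sin_mul_le _ _) (norm_nonneg _)

theorem le_norm_dampedWaveHat (hμ : μ ^ 2 < 4) (ht : 0 ≤ t) {ξ : EuclideanSpace ℝ (Fin n)}
    (hξ : 0 < ‖ξ‖) (hξt : ‖ξ‖ * t ≤ Real.pi / 2) :
    (1 + ‖ξ‖) ^ (-(μ * t) / 2) *
      (2 / Real.pi * t * ‖fourierTransformCLM' u₁ ξ‖ -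
        (1 + |μ| / (2 * √(1 - μ ^ 2 / 4))) * ‖fourierTransformCLM' u₀ ξ‖) ≤
      ‖dampedWaveHat μ u₀ u₁ t ξ‖ := by
  rw [dampedWaveHat, norm_mul, Complex.norm_real, Real.norm_of_nonneg (by positivity)]
  gcongr
  refine (sub_le_sub ?_ (norm_cos_add_sin_mul_le hμ hξ.le _)).trans
    ((norm_sub_le_norm_add _ _).trans_eq (congrArg norm (add_comm _ _)))
  have hb := dampedFreq_pos hμ hξ
  have hsin := two_div_pi_mul_le_one_div_mul_sin_mul hb ht
    ((mul_le_mul_of_nonneg_right (dampedFreq_le hξ.le) ht).trans hξt)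
  rw [norm_one_div_mul_sin_mul, abs_of_nonneg ((by positivity : 0 ≤ 2 / Real.pi * t).trans hsin)]
  exact mul_le_mul_of_nonneg_right hsin (norm_nonneg _)

end Wave

section Estimates

variable {n : ℕ} {μ t : ℝ} {u₀ u₁ : EuclideanSpace ℝ (Fin n) → ℂ}

theorem sq_norm_dampedWaveHat_le (hμ : μ ^ 2 < 4) (ht : 0 ≤ t) (hu₁ : Integrable u₁)
    (hu₁w : Integrable fun x => (1 + ‖x‖) * ‖u₁ x‖) (ξ : EuclideanSpace ℝ (Fin n)) :
    ‖dampedWaveHat μ u₀ u₁ t ξ‖ ^ 2 ≤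
      2 * ((1 + |μ| / (2 * √(1 - μ ^ 2 / 4))) * (∫ x, ‖u₀ x‖) + t * ‖∫ x, u₁ x‖) ^ 2 *
          (1 + ‖ξ‖) ^ (-(μ * t)) +
        2 * (t * ∫ x, (1 + ‖x‖) * ‖u₁ x‖) ^ 2 * ((1 + ‖ξ‖) ^ (-(μ * t)) * ‖ξ‖ ^ 2) := by
  set K := 1 + |μ| / (2 * √(1 - μ ^ 2 / 4))
  set M := ∫ x, (1 + ‖x‖) * ‖u₁ x‖
  set a := K * (∫ x, ‖u₀ x‖) + t * ‖∫ x, u₁ x‖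
  have hû₁ : ‖fourierTransformCLM' u₁ ξ‖ ≤ ‖∫ x, u₁ x‖ + ‖ξ‖ * M :=
    (norm_le_norm_add_norm_sub' _ _).trans
      (add_le_add le_rfl (norm_fourierTransformCLM'_sub_integral_le hu₁ hu₁w ξ))
  have hbracket : K * ‖fourierTransformCLM' u₀ ξ‖ + |t| * ‖fourierTransformCLM' u₁ ξ‖ ≤
      a + t * ‖ξ‖ * M := by
    have hû₀ := norm_fourierTransformCLM'_le u₀ ξ
    rw [abs_of_nonneg ht]
    have : 0 ≤ K := by positivity
    nlinarith [mul_le_mul_of_nonneg_left hû₁ ht]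
  have hρ : ((1 + ‖ξ‖) ^ (-(μ * t) / 2)) ^ 2 = (1 + ‖ξ‖) ^ (-(μ * t)) := by
    rw [← Real.rpow_natCast, ← Real.rpow_mul (by positivity)]
    ring_nf
  calc ‖dampedWaveHat μ u₀ u₁ t ξ‖ ^ 2
      ≤ ((1 + ‖ξ‖) ^ (-(μ * t) / 2) * (a + t * ‖ξ‖ * M)) ^ 2 := by
        gcongr
        exact (norm_dampedWaveHat_le hμ ξ).trans (by gcongr)
    _ = (1 + ‖ξ‖) ^ (-(μ * t)) * (a + t * ‖ξ‖ * M) ^ 2 := by rw [mul_pow, hρ]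
    _ ≤ (1 + ‖ξ‖) ^ (-(μ * t)) * (2 * a ^ 2 + 2 * (t * M) ^ 2 * ‖ξ‖ ^ 2) := by
        gcongr
        nlinarith [sq_nonneg (a - t * ‖ξ‖ * M)]
    _ = _ := by ring

theorem exists_integral_sq_norm_dampedWaveHat_le (hμ : μ ∈ Set.Ioo 0 2) (hu₀ : Integrable u₀)
    (hu₁ : Integrable u₁) (hu₁w : Integrable fun x => (1 + ‖x‖) * ‖u₁ x‖) :
    ∃ D : ℝ, 0 ≤ D ∧ ∀ t : ℝ, (n + 3) / μ ≤ t →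
      Integrable (fun ξ => ‖dampedWaveHat μ u₀ u₁ t ξ‖ ^ 2) ∧
      ∫ ξ, ‖dampedWaveHat μ u₀ u₁ t ξ‖ ^ 2 ≤
        D * (t ^ n)⁻¹ * ((1 + |μ| / (2 * √(1 - μ ^ 2 / 4))) * (∫ x, ‖u₀ x‖) +
          t * ‖∫ x, u₁ x‖ + ∫ x, (1 + ‖x‖) * ‖u₁ x‖) ^ 2 := by
  obtain ⟨hμ0, hμ2⟩ := hμ
  set J₀ := ∫ y : EuclideanSpace ℝ (Fin n), (1 + ‖y‖) ^ (-((n : ℝ) + 1))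
  set J₂ := ∫ y : EuclideanSpace ℝ (Fin n), (1 + ‖y‖) ^ (-((n : ℝ) + 3)) * ‖y‖ ^ 2
  refine ⟨2 * ((n + 1) / μ) ^ n * J₀ + 2 * ((n + 3) / μ) ^ (n + 2) * J₂,
    by positivity, fun t ht => ?_⟩
  have ht0 : 0 < t := lt_of_lt_of_le (by positivity) ht
  have hμt : (n : ℝ) + 3 ≤ μ * t := by rwa [div_le_iff₀' hμ0] at ht
  obtain ⟨hI₀, hJ₀⟩ := integral_one_add_norm_rpow_neg_mul_pow_le
    (ν := volume) (E := EuclideanSpace ℝ (Fin n)) 0 (N := n + 1) (a := μ * t)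
    (by simp) (by linarith)
  obtain ⟨hI₂, hJ₂⟩ := integral_one_add_norm_rpow_neg_mul_pow_le
    (ν := volume) (E := EuclideanSpace ℝ (Fin n)) 2 (N := n + 3) (a := μ * t)
    (by simp; linarith) hμt
  simp only [finrank_euclideanSpace_fin, pow_zero, mul_one, add_zero] at hI₀ hJ₀ hJ₂
  set K := 1 + |μ| / (2 * √(1 - μ ^ 2 / 4))
  set M := ∫ x, (1 + ‖x‖) * ‖u₁ x‖
  set a := K * (∫ x, ‖u₀ x‖) + t * ‖∫ x, u₁ x‖
  have hmaj_int := (hI₀.const_mul (2 * a ^ 2)).add (hI₂.const_mul (2 * (t * M) ^ 2))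
  have hpt := sq_norm_dampedWaveHat_le (μ := μ) (u₀ := u₀) (by nlinarith) ht0.le hu₁ hu₁w
  have hmeas := (measurable_dampedWaveHat hu₀ hu₁ (μ := μ) (t := t)).norm.pow_const 2
  refine ⟨hmaj_int.mono' hmeas.aestronglyMeasurable (.of_forall fun ξ => ?_), ?_⟩
  · rw [Real.norm_of_nonneg (by positivity)]
    exact hpt ξ
  have hM : 0 ≤ M := integral_nonneg fun x => by positivity
  have ha : 0 ≤ a := by positivity
  calc ∫ ξ, ‖dampedWaveHat μ u₀ u₁ t ξ‖ ^ 2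
      ≤ ∫ ξ : EuclideanSpace ℝ (Fin n), (2 * a ^ 2 * (1 + ‖ξ‖) ^ (-(μ * t)) +
          2 * (t * M) ^ 2 * ((1 + ‖ξ‖) ^ (-(μ * t)) * ‖ξ‖ ^ 2)) :=
        integral_mono_of_nonneg (.of_forall fun ξ => by positivity) hmaj_int (.of_forall hpt)
    _ ≤ 2 * a ^ 2 * (((n + 1) / (μ * t)) ^ n * J₀) +
          2 * (t * M) ^ 2 * (((n + 3) / (μ * t)) ^ (n + 2) * J₂) := by
        rw [integral_add (hI₀.const_mul _) (hI₂.const_mul _), integral_const_mul,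
          integral_const_mul]
        gcongr
    _ = (t ^ n)⁻¹ * (2 * ((n + 1) / μ) ^ n * J₀ * a ^ 2 +
          2 * ((n + 3) / μ) ^ (n + 2) * J₂ * M ^ 2) := by
        rw [← div_div, ← div_div, div_pow _ t, div_pow _ t, pow_add t n 2]
        field_simp
    _ ≤ (t ^ n)⁻¹ * ((2 * ((n + 1) / μ) ^ n * J₀ + 2 * ((n + 3) / μ) ^ (n + 2) * J₂) *
          (a + M) ^ 2) := by
        have hJ₀0 : 0 ≤ J₀ := integral_nonneg fun y => by positivity
        have hJ₂0 : 0 ≤ J₂ := integral_nonneg fun y => by positivity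
        have ha2 : a ^ 2 ≤ (a + M) ^ 2 := by nlinarith
        have hM2 : M ^ 2 ≤ (a + M) ^ 2 := by nlinarith
        rw [add_mul]
        gcongr
    _ = _ := by ring

theorem exists_sqrt_integral_sq_norm_dampedWaveHat_le (hμ : μ ∈ Set.Ioo 0 2)
    (hu₀ : Integrable u₀) (hu₁ : Integrable u₁)
    (hu₁w : Integrable fun x => (1 + ‖x‖) * ‖u₁ x‖) :
    ∃ C T : ℝ, 0 < C ∧ ∀ t : ℝ, T ≤ t →
      Integrable (fun ξ => ‖dampedWaveHat μ u₀ u₁ t ξ‖ ^ 2) ∧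
      √(∫ ξ, ‖dampedWaveHat μ u₀ u₁ t ξ‖ ^ 2) ≤
        C * ((∫ x, (1 + ‖x‖) * ‖u₁ x‖) * t ^ (-(n : ℝ) / 2) +
          (∫ x, ‖u₀ x‖) * t ^ (-(n : ℝ) / 2) + ‖∫ x, u₁ x‖ * t ^ (1 - (n : ℝ) / 2)) := by
  obtain ⟨D, hD, hbound⟩ := exists_integral_sq_norm_dampedWaveHat_le hμ hu₀ hu₁ hu₁w
  set K := 1 + |μ| / (2 * √(1 - μ ^ 2 / 4))
  have hK : 1 ≤ K := le_add_of_nonneg_right (by positivity)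
  refine ⟨√D * K + 1, (n + 3) / μ, by positivity, fun t ht => ⟨(hbound t ht).1, ?_⟩⟩
  have ht0 : 0 < t := lt_of_lt_of_le (div_pos (by positivity) hμ.1) ht
  rw [rpow_one_sub_half ht0]
  set M := ∫ x, (1 + ‖x‖) * ‖u₁ x‖
  set A := ∫ x, ‖u₀ x‖
  set P := ‖∫ x, u₁ x‖
  set X := t ^ (-(n : ℝ) / 2)
  have hM : 0 ≤ M := integral_nonneg fun x => by positivity
  have hA : 0 ≤ A := integral_nonneg fun x => by positivity
  have hX : 0 ≤ X := by positivity
  have hS : 0 ≤ M * X + A * X + P * (t * X) := by positivity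
  have hsq : ∫ ξ, ‖dampedWaveHat μ u₀ u₁ t ξ‖ ^ 2 ≤ (√D * X * (K * A + t * P + M)) ^ 2 := by
    rw [mul_pow, mul_pow, Real.sq_sqrt hD, rpow_neg_half_sq ht0.le]
    exact (hbound t ht).2
  calc √(∫ ξ, ‖dampedWaveHat μ u₀ u₁ t ξ‖ ^ 2)
      ≤ √D * X * (K * A + t * P + M) := (Real.sqrt_le_left (by positivity)).2 hsq
    _ = √D * (M * X + K * (A * X) + P * (t * X)) := by ring
    _ ≤ √D * (K * (M * X + A * X + P * (t * X))) := by
        gcongr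
        nlinarith [mul_nonneg hM hX, mul_nonneg (norm_nonneg (∫ x, u₁ x)) (mul_nonneg ht0.le hX)]
    _ ≤ (√D * K + 1) * (M * X + A * X + P * (t * X)) := by nlinarith

theorem mul_le_norm_dampedWaveHat (hμ : μ ∈ Set.Ioo 0 2) (hu₁ : Integrable u₁)
    (hu₁w : Integrable fun x => (1 + ‖x‖) * ‖u₁ x‖) (ht : 0 < t)
    (hlarge : 2 * (∫ x, (1 + ‖x‖) * ‖u₁ x‖) +
      Real.pi * (1 + |μ| / (2 * √(1 - μ ^ 2 / 4))) * (∫ x, ‖u₀ x‖) ≤ t * ‖∫ x, u₁ x‖)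
    {ξ : EuclideanSpace ℝ (Fin n)} (hξ : 0 < ‖ξ‖) (hξt : ‖ξ‖ * t ≤ 1) :
    Real.exp (-(μ / 2)) / Real.pi * t * ‖∫ x, u₁ x‖ ≤ ‖dampedWaveHat μ u₀ u₁ t ξ‖ := by
  obtain ⟨hμ0, hμ2⟩ := hμ
  set K := 1 + |μ| / (2 * √(1 - μ ^ 2 / 4))
  set M := ∫ x, (1 + ‖x‖) * ‖u₁ x‖
  set A := ∫ x, ‖u₀ x‖
  set P := ‖∫ x, u₁ x‖
  have hπ := Real.pi_gt_three
  have hw := le_norm_dampedWaveHat (μ := μ) (u₀ := u₀) (u₁ := u₁) (by nlinarith) ht.le hξ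
    (hξt.trans (by linarith))
  have hû₀ := norm_fourierTransformCLM'_le u₀ ξ
  have hû₁ : P - ‖ξ‖ * M ≤ ‖fourierTransformCLM' u₁ ξ‖ := by
    have := (norm_sub_norm_le (∫ x, u₁ x) (fourierTransformCLM' u₁ ξ)).trans_eq
      (norm_sub_rev _ _)
    linarith [norm_fourierTransformCLM'_sub_integral_le hu₁ hu₁w ξ]
  have hρ : Real.exp (-(μ / 2)) ≤ (1 + ‖ξ‖) ^ (-(μ * t) / 2) := by
    rw [neg_div]
    refine le_trans ?_ (exp_neg_mul_le_one_add_rpow_neg hξ.le (by positivity))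
    gcongr
    nlinarith
  have hbracket : t * P / Real.pi ≤
      2 / Real.pi * t * ‖fourierTransformCLM' u₁ ξ‖ - K * ‖fourierTransformCLM' u₀ ξ‖ := by
    have hM : 0 ≤ M := integral_nonneg fun x => by positivity
    have hK : 0 ≤ K := by positivity
    have h1 : t * (P - ‖ξ‖ * M) ≤ t * ‖fourierTransformCLM' u₁ ξ‖ := by gcongr
    have h2 : t * P - M ≤ t * (P - ‖ξ‖ * M) := by nlinarith
    rw [div_le_iff₀ (by positivity)]
    have h3 : 2 / Real.pi * t * ‖fourierTransformCLM' u₁ ξ‖ * Real.pi =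
        2 * (t * ‖fourierTransformCLM' u₁ ξ‖) := by
      field_simp
    nlinarith [mul_le_mul_of_nonneg_left hû₀ hK]
  calc Real.exp (-(μ / 2)) / Real.pi * t * P = Real.exp (-(μ / 2)) * (t * P / Real.pi) := by ring
    _ ≤ _ := by
      refine le_trans ?_ hw
      gcongr

theorem exists_mul_le_sqrt_integral_sq_norm_dampedWaveHat (hn : 1 ≤ n) (hμ : μ ∈ Set.Ioo 0 2)
    (hu₁ : Integrable u₁) (hu₁w : Integrable fun x => (1 + ‖x‖) * ‖u₁ x‖) :
    ∃ C T : ℝ, 0 < C ∧ 0 < T ∧ ∀ t : ℝ, T ≤ t →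
      Integrable (fun ξ => ‖dampedWaveHat μ u₀ u₁ t ξ‖ ^ 2) →
      C * ‖∫ x, u₁ x‖ * t ^ (1 - (n : ℝ) / 2) ≤ √(∫ ξ, ‖dampedWaveHat μ u₀ u₁ t ξ‖ ^ 2) := by
  have : Nontrivial (EuclideanSpace ℝ (Fin n)) :=
    Module.nontrivial_of_finrank_pos (R := ℝ) (by rw [finrank_euclideanSpace_fin]; omega)
  set K := 1 + |μ| / (2 * √(1 - μ ^ 2 / 4))
  set M := ∫ x, (1 + ‖x‖) * ‖u₁ x‖
  set A := ∫ x, ‖u₀ x‖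
  set P := ‖∫ x, u₁ x‖
  set c := Real.exp (-(μ / 2)) / Real.pi
  set v := volume.real (Metric.ball (0 : EuclideanSpace ℝ (Fin n)) 1)
  have hv : 0 < v := ENNReal.toReal_pos (Metric.measure_ball_pos volume 0 one_pos).ne'
    measure_ball_lt_top.ne
  have hT : 0 < (2 * M + Real.pi * K * A) / P + 1 := by
    have : 0 ≤ M := integral_nonneg fun x => by positivity
    have : 0 ≤ A := integral_nonneg fun x => by positivity
    positivity
  refine ⟨c * √v, _, by positivity, hT, fun t ht hint => ?_⟩
  have ht0 : 0 < t := hT.trans_le ht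
  rcases (show 0 ≤ P from norm_nonneg _).eq_or_lt with hP | hP
  · rw [← hP, mul_zero, zero_mul]
    positivity
  have hlarge : 2 * M + Real.pi * K * A ≤ t * P := by
    rw [← div_le_iff₀ hP]
    linarith
  set S := Metric.ball (0 : EuclideanSpace ℝ (Fin n)) (1 / t) \ {0}
  have hS : ∀ ξ ∈ S, (c * t * P) ^ 2 ≤ ‖dampedWaveHat μ u₀ u₁ t ξ‖ ^ 2 := by
    rintro ξ ⟨hball, hξ0⟩
    rw [mem_ball_zero_iff, lt_div_iff₀ ht0] at hball
    gcongr
    exact mul_le_norm_dampedWaveHat hμ hu₁ hu₁w ht0 hlarge (norm_pos_iff.2 hξ0) hball.le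
  have hvolS : volume.real S = (1 / t) ^ n * v := by
    rw [measureReal_ball_diff_singleton volume 0 (by positivity), finrank_euclideanSpace_fin]
  have hint_S := setIntegral_ge_of_const_le_real (measurableSet_ball.diff
    (measurableSet_singleton 0)) (measure_ne_top_of_subset Set.sdiff_subset measure_ball_lt_top.ne)
    hS hint.integrableOn
  have hS_le := setIntegral_le_integral (s := S) hint (.of_forall fun ξ => by positivity)
  rw [Real.le_sqrt (by positivity) (integral_nonneg fun ξ => by positivity)]
  calc (c * √v * P * t ^ (1 - (n : ℝ) / 2)) ^ 2 = (c * t * P) ^ 2 * ((1 / t) ^ n * v) := by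
        rw [rpow_one_sub_half ht0, mul_pow, mul_pow, mul_pow, mul_pow, rpow_neg_half_sq ht0.le,
          Real.sq_sqrt hv.le, one_div_pow]
        field_simp
    _ ≤ _ := by rw [← hvolS]; linarith

end Estimates

/-- Theorem 1.2: for `μ ∈ (0,2)`, `u₀ ∈ L¹`, `u₁ ∈ L^{1,1}`,
`C₁ |P₁| t^{1-n/2} ≤ ‖w(t,·)‖_{L²} ≤ C₂(‖u₁‖_{1,1} t^{-n/2} + ‖u₀‖₁ t^{-n/2} +
|P₁| t^{1-n/2} + |P₁| e^{-αt})` for large `t`. -/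
theorem stmt14 (n : ℕ) (hn : 1 ≤ n) (μ : ℝ) (hμ : μ ∈ Set.Ioo (0:ℝ) 2)
    (u₀ u₁ : EuclideanSpace ℝ (Fin n) → ℂ)
    (hu₀ : Integrable u₀) (hu₁ : Integrable u₁)
    (hu₁w : Integrable (fun x : EuclideanSpace ℝ (Fin n) => (1 + ‖x‖) * ‖u₁ x‖)) :
    let b : ℝ → ℝ := fun r => Real.sqrt (r ^ 2 - μ ^ 2 / 4 * Real.log (1 + r) ^ 2)
    let P₁ : ℂ := ∫ x, u₁ x
    let w : ℝ → EuclideanSpace ℝ (Fin n) → ℂ := fun t ξ =>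
      (((1 + ‖ξ‖) ^ (-(μ * t) / 2) : ℝ) : ℂ) *
        (((Real.cos (b ‖ξ‖ * t) : ℝ) : ℂ) * fourierTransformCLM' u₀ ξ +
         ((μ * Real.log (1 + ‖ξ‖) / (2 * b ‖ξ‖) : ℝ) : ℂ) *
           ((Real.sin (b ‖ξ‖ * t) : ℝ) : ℂ) * fourierTransformCLM' u₀ ξ +
         ((1 / b ‖ξ‖ : ℝ) : ℂ) * ((Real.sin (b ‖ξ‖ * t) : ℝ) : ℂ) *
           fourierTransformCLM' u₁ ξ)
    ∃ C₁ C₂ α t₀ : ℝ, 0 < C₁ ∧ 0 < C₂ ∧ 0 < α ∧ 0 < t₀ ∧ ∀ t : ℝ, t₀ ≤ t →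
      C₁ * ‖P₁‖ * t ^ (1 - (n : ℝ) / 2) ≤
        Real.sqrt (∫ ξ : EuclideanSpace ℝ (Fin n), ‖w t ξ‖ ^ 2) ∧
      Real.sqrt (∫ ξ : EuclideanSpace ℝ (Fin n), ‖w t ξ‖ ^ 2) ≤
        C₂ * ((∫ x, (1 + ‖x‖) * ‖u₁ x‖) * t ^ (-(n : ℝ) / 2) +
          (∫ x, ‖u₀ x‖) * t ^ (-(n : ℝ) / 2) +
          ‖P₁‖ * t ^ (1 - (n : ℝ) / 2) + ‖P₁‖ * Real.exp (-α * t)) := by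
  intro b P₁ w
  obtain ⟨C₂, T₂, hC₂, hupper⟩ :=
    exists_sqrt_integral_sq_norm_dampedWaveHat_le hμ hu₀ hu₁ hu₁w
  obtain ⟨C₁, T₁, hC₁, hT₁, hlower⟩ :=
    exists_mul_le_sqrt_integral_sq_norm_dampedWaveHat (u₀ := u₀) hn hμ hu₁ hu₁w
  refine ⟨C₁, C₂, 1, max T₁ T₂, hC₁, hC₂, one_pos, lt_max_of_lt_left hT₁, fun t ht => ?_⟩
  obtain ⟨hint, hle⟩ := hupper t (le_of_max_le_right ht)
  exact ⟨hlower t (le_of_max_le_left ht) hint,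
    hle.trans (mul_le_mul_of_nonneg_left (le_add_of_nonneg_right (by positivity)) hC₂.le)⟩
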